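/- For every n ≥ 1, the class of distributive rotational lattices satisfying the identity g^n(x) = x equals the variety generated by {𝔅_d : d divides n}. -/

import Mathlib

/-- Terms in the signature `(⊔, ⊓, g)` with variables in `ℕ`. -/
inductive RTerm : Type
  | var : ℕ → RTerm
  | sup : RTerm → RTerm → RTerm
  | inf : RTerm → RTerm → RTerm
  | rot : RTerm → RTerm

/-- Evaluation of a term in a raw algebra `(A; s, i, g)` of the signature. -/
def RTerm.eval {A : Type*} (s i : A → A → A) (g : A → A) (v : ℕ → A) : RTerm → A
  | .var k => v k
  | .sup t₁ t₂ => s (t₁.eval s i g v) (t₂.eval s i g v)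
  | .inf t₁ t₂ => i (t₁.eval s i g v) (t₂.eval s i g v)
  | .rot t => g (t.eval s i g v)

/-- The algebra `(A; s, i, g)` satisfies the identity `e.1 ≈ e.2`. -/
def Sat {A : Type*} (s i : A → A → A) (g : A → A) (e : RTerm × RTerm) : Prop :=
  ∀ v : ℕ → A, e.1.eval s i g v = e.2.eval s i g v

/-- `(A; s, i, g)` is a distributive rotational lattice. -/
def IsDistRotLat {A : Type*} (s i : A → A → A) (g : A → A) : Prop :=
  (∀ x y, s x y = s y x) ∧ (∀ x y z, s (s x y) z = s x (s y z)) ∧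
  (∀ x y, i x y = i y x) ∧ (∀ x y z, i (i x y) z = i x (i y z)) ∧
  (∀ x y, s x (i x y) = x) ∧ (∀ x y, i x (s x y) = x) ∧
  (∀ x y z, i x (s y z) = s (i x y) (i x z)) ∧
  (∀ x y, g (s x y) = s (g x) (g y)) ∧ (∀ x y, g (i x y) = i (g x) (g y)) ∧
  Function.Bijective g ∧ (∃ n : ℕ, 0 < n ∧ g^[n] = id)

/-- The shift automorphism of the rotational cube `𝔅_n`. -/
def cubeShift (n : ℕ) : Set (ZMod n) → Set (ZMod n) :=
  fun S => (· + 1) '' S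

/-- By Birkhoff's theorem, `(A; s, i, g)` belongs to the variety `V(X)` generated
by `{𝔅_n : n ∈ X}` iff it satisfies every identity valid in all generators. -/
def MemV (X : Set ℕ) {A : Type*} (s i : A → A → A) (g : A → A) : Prop :=
  ∀ e : RTerm × RTerm,
    (∀ n ∈ X, Sat (· ∪ ·) (· ∩ ·) (cubeShift n) e) → Sat s i g e

/-! A distributive lattice is separated by its prime filters. When `gⁿ = id`, a prime filter `F`
yields the homomorphism `x ↦ {k ∈ ℤ/n | g⁻ᵏ x ∈ F}` into `𝔅_n`, which turns `g` into the shift;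
these homomorphisms separate the points of `A`, so every identity of `𝔅_n` holds in `A`.
Conversely, each defining identity of `D_n` holds in every `𝔅_d` with `d ∣ n`, hence in every
algebra of the variety. -/

open Function

theorem RTerm.eval_rot_iterate {A : Type*} (s i : A → A → A) (g : A → A) (v : ℕ → A)
    (m : ℕ) (t : RTerm) : (RTerm.rot^[m] t).eval s i g v = g^[m] (t.eval s i g v) := by
  induction m with
  | zero => rfl
  | succ m ih => rw [iterate_succ_apply', iterate_succ_apply', eval, ih]

structure IsRHom {A B : Type*} (s i : A → A → A) (g : A → A) (s' i' : B → B → B) (g' : B → B)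
    (h : A → B) : Prop where
  map_sup : ∀ x y, h (s x y) = s' (h x) (h y)
  map_inf : ∀ x y, h (i x y) = i' (h x) (h y)
  map_rot : ∀ x, h (g x) = g' (h x)

section Homomorphisms

variable {A B : Type*} {s i : A → A → A} {g : A → A} {s' i' : B → B → B} {g' : B → B}

theorem IsRHom.eval_eq {h : A → B} (hh : IsRHom s i g s' i' g' h) (v : ℕ → A) (t : RTerm) :
    h (t.eval s i g v) = t.eval s' i' g' (h ∘ v) := by
  induction t with
  | var k => rfl
  | sup t₁ t₂ ih₁ ih₂ => rw [RTerm.eval, RTerm.eval, hh.map_sup, ih₁, ih₂]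
  | inf t₁ t₂ ih₁ ih₂ => rw [RTerm.eval, RTerm.eval, hh.map_inf, ih₁, ih₂]
  | rot t ih => rw [RTerm.eval, RTerm.eval, hh.map_rot, ih]

theorem Sat.of_separating {e : RTerm × RTerm} (he : Sat s' i' g' e)
    (hsep : ∀ a b : A, a ≠ b → ∃ h : A → B, IsRHom s i g s' i' g' h ∧ h a ≠ h b) :
    Sat s i g e := by
  intro v
  by_contra hne
  obtain ⟨h, hh, hne'⟩ := hsep _ _ hne
  exact hne' (by rw [hh.eval_eq, hh.eval_eq]; exact he (h ∘ v))

end Homomorphisms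

section PrimeFilters

variable {A : Type*} [DistribLattice A]

theorem exists_latticeHom_prop_of_not_le {a b : A} (hab : ¬a ≤ b) :
    ∃ f : LatticeHom A Prop, f a ∧ ¬f b := by
  have hdisj : Disjoint (Order.PFilter.principal a : Set A) (Order.Ideal.principal b : Set A) :=
    Set.disjoint_left.2 fun x hax hxb => hab (le_trans hax hxb)
  obtain ⟨J, hJ, hbJ, haJ⟩ := DistribLattice.prime_ideal_of_disjoint_filter_ideal hdisj
  refine ⟨⟨⟨fun x => x ∉ J, fun x y => ?_⟩, fun x y => ?_⟩, ?_, ?_⟩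
  · exact propext ⟨fun h => not_and_or.1 (mt Order.Ideal.sup_mem_iff.2 h),
      fun h hxy => not_and_or.2 h (Order.Ideal.sup_mem_iff.1 hxy)⟩
  · exact propext ⟨fun h => ⟨fun hx => h (J.lower inf_le_left hx),
      fun hy => h (J.lower inf_le_right hy)⟩, fun ⟨hx, hy⟩ hxy => (hJ.mem_or_mem hxy).elim hx hy⟩
  · exact Set.disjoint_left.1 haJ (Order.PFilter.mem_principal.2 le_rfl)
  · exact not_not.2 (hbJ (Order.Ideal.mem_principal.2 le_rfl))

theorem exists_latticeHom_prop_ne {a b : A} (hab : a ≠ b) : ∃ f : LatticeHom A Prop, f a ≠ f b := by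
  rcases not_and_or.1 (mt (fun h => le_antisymm h.1 h.2) hab) with h | h
  · obtain ⟨f, hfa, hfb⟩ := exists_latticeHom_prop_of_not_le h
    exact ⟨f, fun he => hfb (he ▸ hfa)⟩
  · obtain ⟨f, hfb, hfa⟩ := exists_latticeHom_prop_of_not_le h
    exact ⟨f, fun he => hfa (he ▸ hfb)⟩

end PrimeFilters

theorem iterate_eq_of_natCast_eq {α : Type*} {g : α → α} {n a b : ℕ} (hg : g^[n] = id)
    (hab : (a : ZMod n) = b) : g^[a] = g^[b] := by
  funext x
  have hx : IsPeriodicPt g n x := congrFun hg x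
  rw [← hx.iterate_mod_apply a, ← hx.iterate_mod_apply b,
    (ZMod.natCast_eq_natCast_iff' a b n).1 hab]

theorem mem_cubeShift {d : ℕ} {S : Set (ZMod d)} {k : ZMod d} : k ∈ cubeShift d S ↔ k - 1 ∈ S :=
  ⟨by rintro ⟨j, hj, rfl⟩; simpa using hj, fun hk => ⟨k - 1, hk, sub_add_cancel k 1⟩⟩

theorem cubeShift_iterate (d m : ℕ) (S : Set (ZMod d)) :
    (cubeShift d)^[m] S = (· + (m : ZMod d)) '' S := by
  induction m with
  | zero => simp
  | succ m ih =>
    rw [iterate_succ_apply', ih, cubeShift, ← Set.image_comp]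
    congr 1
    funext x
    simp only [comp_apply]
    push_cast
    ring

theorem cubeShift_iterate_eq_id {d n : ℕ} (h : d ∣ n) : (cubeShift d)^[n] = id := by
  funext S
  rw [cubeShift_iterate, (ZMod.natCast_eq_zero_iff n d).2 h]
  simp

section ToCube

variable {A : Type*} {g : A → A} {n : ℕ}

/-- `g^[(-k).val]` stands for `g⁻ᵏ`, which it is once `gⁿ = id`. -/
def toCube (f : A → Prop) (g : A → A) (n : ℕ) (x : A) : Set (ZMod n) :=
  {k | f (g^[(-k).val] x)}

theorem zero_mem_toCube {f : A → Prop} {x : A} : 0 ∈ toCube f g n x ↔ f x := by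
  simp [toCube]

variable [DistribLattice A]

theorem isRHom_toCube [NeZero n] (f : LatticeHom A Prop) (hsup : Semiconj₂ g (· ⊔ ·) (· ⊔ ·))
    (hinf : Semiconj₂ g (· ⊓ ·) (· ⊓ ·)) (hg : g^[n] = id) :
    IsRHom (· ⊔ ·) (· ⊓ ·) g (· ∪ ·) (· ∩ ·) (cubeShift n) (toCube f g n) where
  map_sup x y := by
    ext k
    simp only [toCube, Set.mem_ofPred_eq, Set.mem_union, hsup.iterate _ x y, map_sup]
    rfl
  map_inf x y := by
    ext k
    simp only [toCube, Set.mem_ofPred_eq, Set.mem_inter_iff, hinf.iterate _ x y, map_inf]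
    rfl
  map_rot x := by
    ext k
    have hk : g^[(-k).val + 1] = g^[(-(k - 1)).val] :=
      iterate_eq_of_natCast_eq hg (by
        simp only [Nat.cast_add, ZMod.natCast_val, ZMod.cast_id', id, Nat.cast_one]
        ring)
    rw [mem_cubeShift, toCube, toCube, Set.mem_ofPred_eq, Set.mem_ofPred_eq, ← iterate_succ_apply,
      hk]

theorem exists_isRHom_cube_ne [NeZero n] (hsup : Semiconj₂ g (· ⊔ ·) (· ⊔ ·))
    (hinf : Semiconj₂ g (· ⊓ ·) (· ⊓ ·)) (hg : g^[n] = id) {a b : A} (hab : a ≠ b) :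
    ∃ h : A → Set (ZMod n),
      IsRHom (· ⊔ ·) (· ⊓ ·) g (· ∪ ·) (· ∩ ·) (cubeShift n) h ∧ h a ≠ h b := by
  obtain ⟨f, hf⟩ := exists_latticeHom_prop_ne hab
  refine ⟨toCube f g n, isRHom_toCube f hsup hinf hg, fun h => hf ?_⟩
  have h0 := congrArg (0 ∈ ·) h
  simpa only [zero_mem_toCube] using h0

end ToCube

section RotationalLattices

variable {A : Type} {s i : A → A → A} {g : A → A}

abbrev IsDistRotLat.toDistribLattice (hd : IsDistRotLat s i g) : DistribLattice A :=
  letI : Max A := ⟨s⟩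
  letI : Min A := ⟨i⟩
  letI : Lattice A := Lattice.mk' hd.1 hd.2.1 hd.2.2.1 hd.2.2.2.1 hd.2.2.2.2.1 hd.2.2.2.2.2.1
  DistribLattice.ofInfSupLe fun a b c => (hd.2.2.2.2.2.2.1 a b c).le

theorem IsDistRotLat.memV (hd : IsDistRotLat s i g) {n : ℕ} (hn : 0 < n) (hg : g^[n] = id) :
    MemV {d : ℕ | d ∣ n} s i g := by
  let _ := hd.toDistribLattice
  have ⟨_, _, _, _, _, _, _, hsup, hinf, _⟩ := hd
  have : NeZero n := ⟨hn.ne'⟩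
  intro e he
  exact Sat.of_separating (he n dvd_rfl) fun a b hab => exists_isRHom_cube_ne hsup hinf hg hab

theorem MemV.iterate_eq_id {n : ℕ} (hM : MemV {d : ℕ | d ∣ n} s i g) : g^[n] = id := by
  funext x
  have h := hM (RTerm.rot^[n] (.var 0), .var 0) (fun d hd v => by
    simp only [RTerm.eval_rot_iterate, cubeShift_iterate_eq_id hd]; rfl) fun _ => x
  simpa only [RTerm.eval_rot_iterate, RTerm.eval, id_eq] using h

theorem bijective_of_iterate_eq_id {α : Type*} {g : α → α} {n : ℕ} (hn : 0 < n)
    (hg : g^[n] = id) : Bijective g := by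
  obtain ⟨m, rfl⟩ : ∃ m, n = m + 1 := ⟨n - 1, by omega⟩
  exact bijective_iff_has_inverse.2 ⟨g^[m], fun x => by simpa using congrFun hg x,
    fun x => by simpa [iterate_succ_apply'] using congrFun hg x⟩

theorem MemV.isDistRotLat {n : ℕ} (hn : 0 < n) (hM : MemV {d : ℕ | d ∣ n} s i g) :
    IsDistRotLat s i g := by
  have law : ∀ t₁ t₂ : RTerm, (∀ d : ℕ, ∀ v : ℕ → Set (ZMod d),
      t₁.eval (· ∪ ·) (· ∩ ·) (cubeShift d) v = t₂.eval (· ∪ ·) (· ∩ ·) (cubeShift d) v) →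
      ∀ x y z : A, t₁.eval s i g (fun k => [x, y, z].getD k x) =
        t₂.eval s i g (fun k => [x, y, z].getD k x) :=
    fun t₁ t₂ h x y z => hM (t₁, t₂) (fun d _ => h d) _
  have hg := hM.iterate_eq_id
  refine ⟨fun x y => ?_, fun x y z => ?_, fun x y => ?_, fun x y z => ?_, fun x y => ?_,
    fun x y => ?_, fun x y z => ?_, fun x y => ?_, fun x y => ?_,
    bijective_of_iterate_eq_id hn hg, n, hn, hg⟩
  · simpa [RTerm.eval] using law (.sup (.var 0) (.var 1)) (.sup (.var 1) (.var 0))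
      (fun _ _ => Set.union_comm _ _) x y x
  · simpa [RTerm.eval] using law (.sup (.sup (.var 0) (.var 1)) (.var 2))
      (.sup (.var 0) (.sup (.var 1) (.var 2))) (fun _ _ => Set.union_assoc _ _ _) x y z
  · simpa [RTerm.eval] using law (.inf (.var 0) (.var 1)) (.inf (.var 1) (.var 0))
      (fun _ _ => Set.inter_comm _ _) x y x
  · simpa [RTerm.eval] using law (.inf (.inf (.var 0) (.var 1)) (.var 2))
      (.inf (.var 0) (.inf (.var 1) (.var 2))) (fun _ _ => Set.inter_assoc _ _ _) x y z
  · simpa [RTerm.eval] using law (.sup (.var 0) (.inf (.var 0) (.var 1))) (.var 0)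
      (fun _ _ => sup_inf_self) x y x
  · simpa [RTerm.eval] using law (.inf (.var 0) (.sup (.var 0) (.var 1))) (.var 0)
      (fun _ _ => inf_sup_self) x y x
  · simpa [RTerm.eval] using law (.inf (.var 0) (.sup (.var 1) (.var 2)))
      (.sup (.inf (.var 0) (.var 1)) (.inf (.var 0) (.var 2)))
      (fun _ _ => Set.inter_union_distrib_left _ _ _) x y z
  · simpa [RTerm.eval] using law (.rot (.sup (.var 0) (.var 1)))
      (.sup (.rot (.var 0)) (.rot (.var 1))) (fun _ _ => Set.image_union _ _ _) x y x
  · simpa [RTerm.eval] using law (.rot (.inf (.var 0) (.var 1)))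
      (.inf (.rot (.var 0)) (.rot (.var 1)))
      (fun _ _ => Set.image_inter (add_left_injective 1)) x y x

end RotationalLattices

/-- For every `n ≥ 1`, the class `D_n` of distributive rotational
lattices satisfying `gⁿ(x) = x` equals the variety generated by
`{𝔅_d : d ∣ n}`. -/
theorem stmt_17 (n : ℕ) (hn : 0 < n) :
    ∀ (A : Type) (s i : A → A → A) (g : A → A),
      (IsDistRotLat s i g ∧ g^[n] = id) ↔ MemV {d : ℕ | d ∣ n} s i g :=
  fun _ _ _ _ => ⟨fun ⟨hd, hg⟩ => hd.memV hn hg, fun hM => ⟨hM.isDistRotLat hn, hM.iterate_eq_id⟩⟩
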